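/- arXiv:2512.10175 — 5 statements merged into one kernel-verified Lean document; each statement's English description precedes it below -/
import Mathlib

section
/- Let P4 = v1v2v3v4 be a path on four vertices and let L be a list assignment with |L(v1)| = |L(v3)| = |L(v4)| = 2 and |L(v2)| = 3. Then the square of P4 (the complete graph on {v1,v2,v3,v4} minus the edge v1v4) admits a proper L-coloring. -/
/-- Pick an element of `s` different from two given values, when `3 ≤ s.card`. -/
lemma exists_notmem {s t : Finset ℕ} (h : t.card < s.card) : ∃ x ∈ s, x ∉ t := by
  by_contra hc
  push_neg at hc
  exact absurd (Finset.card_le_card hc) (by omega)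

/-- Pick an element of `s` different from two given values, when `3 ≤ s.card`. -/
lemma avoid2 {s : Finset ℕ} (a b : ℕ) (h : 3 ≤ s.card) :
    ∃ x ∈ s, x ≠ a ∧ x ≠ b := by
  have hcard : ({a, b} : Finset ℕ).card < s.card := by
    calc ({a, b} : Finset ℕ).card ≤ 2 := Finset.card_insert_le _ _ |>.trans (by simp)
      _ < s.card := by omega
  obtain ⟨x, hx, hxn⟩ := exists_notmem hcard
  simp only [Finset.mem_insert, Finset.mem_singleton, not_or] at hxn
  exact ⟨x, hx, hxn.1, hxn.2⟩

/-- Lemma 2.1: the square of the path `v1 v2 v3 v4` (edges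
`v1v2, v1v3, v2v3, v2v4, v3v4`) is colorable from lists of sizes
`2, 3, 2, 2`. Vertex `i : Fin 4` stands for `v(i+1)`. -/
theorem path4_square_list_colorable (L : Fin 4 → Finset ℕ)
    (h1 : (L 0).card = 2) (h2 : (L 1).card = 3)
    (h3 : (L 2).card = 2) (h4 : (L 3).card = 2) :
    ∃ f : Fin 4 → ℕ, (∀ v, f v ∈ L v) ∧
      f 0 ≠ f 1 ∧ f 0 ≠ f 2 ∧ f 1 ≠ f 2 ∧ f 1 ≠ f 3 ∧ f 2 ≠ f 3 := by
  by_cases hcap : (L 0 ∩ L 3).Nonempty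
  · obtain ⟨c, hc⟩ := hcap
    rw [Finset.mem_inter] at hc
    obtain ⟨f2, hf2, hf2c⟩ := Finset.exists_mem_ne (s := L 2) (by omega) c
    obtain ⟨f1, hf1, hf1c, hf12⟩ := avoid2 (s := L 1) c f2 (by omega)
    refine ⟨![c, f1, f2, c], ?_, ?_, ?_, ?_, ?_, ?_⟩ <;>
      first
      | (intro v; fin_cases v <;> simp [hc.1, hc.2, hf1, hf2])
      | simp [hf1c.symm, hf2c.symm, hf1c, hf2c, hf12]
  · have hdisj : Disjoint (L 0) (L 3) := by
      rwa [Finset.not_nonempty_iff_eq_empty, ← Finset.disjoint_iff_inter_eq_empty] at hcap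
    have hcard : (L 1).card < ((L 0) ∪ (L 3)).card := by
      rw [Finset.card_union_of_disjoint hdisj]; omega
    obtain ⟨c, hcU, hcL1⟩ := exists_notmem hcard
    rcases Finset.mem_union.mp hcU with hc0 | hc3
    · -- c ∈ L0 \ L1
      obtain ⟨f2, hf2, hf2c⟩ := Finset.exists_mem_ne (s := L 2) (by omega) c
      obtain ⟨f3, hf3, hf32⟩ := Finset.exists_mem_ne (s := L 3) (by omega) f2
      obtain ⟨f1, hf1, hf12, hf13⟩ := avoid2 (s := L 1) f2 f3 (by omega)
      have hf1c : f1 ≠ c := fun h => hcL1 (h ▸ hf1)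
      refine ⟨![c, f1, f2, f3], ?_, ?_, ?_, ?_, ?_, ?_⟩ <;>
        first
        | (intro v; fin_cases v <;> simp [hc0, hf1, hf2, hf3])
        | simp [hf1c.symm, hf2c.symm, hf12, hf13, hf32.symm]
    · -- c ∈ L3 \ L1
      obtain ⟨f2, hf2, hf2c⟩ := Finset.exists_mem_ne (s := L 2) (by omega) c
      obtain ⟨f0, hf0, hf02⟩ := Finset.exists_mem_ne (s := L 0) (by omega) f2
      obtain ⟨f1, hf1, hf10, hf12⟩ := avoid2 (s := L 1) f0 f2 (by omega)
      have hf1c : f1 ≠ c := fun h => hcL1 (h ▸ hf1)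
      refine ⟨![f0, f1, f2, c], ?_, ?_, ?_, ?_, ?_, ?_⟩ <;>
        first
        | (intro v; fin_cases v <;> simp [hc3, hf0, hf1, hf2])
        | simp [hf10.symm, hf02, hf12, hf1c, hf2c]
end

section
/- Let J1 be the graph with vertices v1,...,v5 and edges v1v2, v2v3, v3v4, v2v5, v3v5. If L is a list assignment with |L(v1)| = 2, |L(v2)| = 3, |L(v3)| = 4, |L(v4)| = 3, |L(v5)| = 3, then the square of J1 admits a proper L-coloring. -/
/-- Lemma 2.2: the square of the graph `J1` (edges `v1v2, v2v3, v3v4, v2v5, v3v5`)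
has edges between all pairs except `v1v4`; it is colorable from lists of sizes
`2, 3, 4, 3, 3`. Vertex `i : Fin 5` stands for `v(i+1)`. -/
theorem J1_square_list_colorable (L : Fin 5 → Finset ℕ)
    (h1 : (L 0).card = 2) (h2 : (L 1).card = 3) (h3 : (L 2).card = 4)
    (h4 : (L 3).card = 3) (h5 : (L 4).card = 3) :
    ∃ f : Fin 5 → ℕ, (∀ v, f v ∈ L v) ∧
      f 0 ≠ f 1 ∧ f 0 ≠ f 2 ∧ f 0 ≠ f 4 ∧
      f 1 ≠ f 2 ∧ f 1 ≠ f 3 ∧ f 1 ≠ f 4 ∧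
      f 2 ≠ f 3 ∧ f 2 ≠ f 4 ∧ f 3 ≠ f 4 := by
  have hne : ∀ (S T : Finset ℕ), T.card < S.card → (S \ T).Nonempty := by
    intro S T h
    rw [← Finset.card_pos]
    have := Finset.le_card_sdiff T S
    omega
  by_cases hc : (L 0 ∩ L 3).Nonempty
  · -- Case 1: color v0 and v3 the same, then greedily v1, v4, v2
    obtain ⟨c, hcm⟩ := hc
    have hc0 : c ∈ L 0 := (Finset.mem_inter.1 hcm).1
    have hc3 : c ∈ L 3 := (Finset.mem_inter.1 hcm).2
    obtain ⟨c1, hc1⟩ := hne (L 1) {c} (by simp [h2])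
    obtain ⟨c4, hc4⟩ := hne (L 4) {c, c1} (by
      have := Finset.card_insert_le c ({c1} : Finset ℕ)
      simp only [Finset.card_singleton] at this
      omega)
    obtain ⟨c2, hc2⟩ := hne (L 2) {c, c1, c4} (by
      have ha := Finset.card_insert_le c ({c1, c4} : Finset ℕ)
      have hb := Finset.card_insert_le c1 ({c4} : Finset ℕ)
      simp only [Finset.card_singleton] at ha hb
      omega)
    simp only [Finset.mem_sdiff, Finset.mem_insert, Finset.mem_singleton, not_or] at hc1 hc4 hc2
    refine ⟨![c, c1, c2, c, c4], ?_, ?_, ?_, ?_, ?_, ?_, ?_, ?_, ?_, ?_⟩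
    · intro v; fin_cases v <;> simp_all
    all_goals simp_all [Ne, eq_comm]
  · -- Case 2: lists of v0 and v3 disjoint; Hall's theorem gives a full SDR
    have hdisj : Disjoint (L 0) (L 3) := by
      rw [Finset.disjoint_iff_inter_eq_empty]
      rwa [Finset.not_nonempty_iff_eq_empty] at hc
    have hall : ∀ s : Finset (Fin 5), s.card ≤ (s.biUnion L).card := by
      intro s
      have hsub : ∀ i ∈ s, (L i).card ≤ (s.biUnion L).card := fun i hi =>
        Finset.card_le_card (Finset.subset_biUnion_of_mem L hi)
      by_cases h03 : 0 ∈ s ∧ 3 ∈ s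
      · -- biUnion contains L0 ∪ L3 of size 5
        have : (L 0 ∪ L 3) ⊆ s.biUnion L :=
          Finset.union_subset (Finset.subset_biUnion_of_mem L h03.1)
            (Finset.subset_biUnion_of_mem L h03.2)
        have h5' : (L 0 ∪ L 3).card = 5 := by
          rw [Finset.card_union_of_disjoint hdisj, h1, h4]
        have := Finset.card_le_card this
        have := s.card_le_univ
        simp only [Finset.card_univ, Fintype.card_fin] at *
        omega
      · have hcard4 : s.card ≤ 4 := by
          rcases not_and_or.1 h03 with h | h
          · have : s ⊆ Finset.univ.erase 0 := fun x hx =>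
              Finset.mem_erase.2 ⟨fun e => h (e ▸ hx), Finset.mem_univ x⟩
            have := Finset.card_le_card this
            simpa [Finset.card_erase_of_mem] using this
          · have : s ⊆ Finset.univ.erase 3 := fun x hx =>
              Finset.mem_erase.2 ⟨fun e => h (e ▸ hx), Finset.mem_univ x⟩
            have := Finset.card_le_card this
            simpa [Finset.card_erase_of_mem] using this
        by_cases h2s : 2 ∈ s
        · have := hsub 2 h2s
          omega
        · -- s ⊆ {0,1,3,4} minus one of 0/3, so card ≤ 3
          have hcard3 : s.card ≤ 3 := by
            rcases not_and_or.1 h03 with h | h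
            · have : s ⊆ (Finset.univ.erase 0).erase 2 := fun x hx =>
                Finset.mem_erase.2 ⟨fun e => h2s (e ▸ hx),
                  Finset.mem_erase.2 ⟨fun e => h (e ▸ hx), Finset.mem_univ x⟩⟩
              have := Finset.card_le_card this
              simpa [Finset.card_erase_of_mem, Finset.mem_erase] using this
            · have : s ⊆ (Finset.univ.erase 3).erase 2 := fun x hx =>
                Finset.mem_erase.2 ⟨fun e => h2s (e ▸ hx),
                  Finset.mem_erase.2 ⟨fun e => h (e ▸ hx), Finset.mem_univ x⟩⟩
              have := Finset.card_le_card this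
              simpa [Finset.card_erase_of_mem, Finset.mem_erase] using this
          by_cases h134 : 1 ∈ s ∨ 3 ∈ s ∨ 4 ∈ s
          · rcases h134 with h | h | h
            · have := hsub 1 h; omega
            · have := hsub 3 h; omega
            · have := hsub 4 h; omega
          · -- s ⊆ {0}
            push_neg at h134
            rcases Finset.eq_empty_or_nonempty s with rfl | ⟨x, hx⟩
            · simp
            · have hx0 : x = 0 := by
                fin_cases x <;> simp_all
              have := hsub 0 (hx0 ▸ hx)
              have hs1 : s.card ≤ 1 := by
                have : s ⊆ {0} := fun y hy => by
                  have : y = 0 := by fin_cases y <;> simp_all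
                  simp [this]
                simpa using Finset.card_le_card this
              omega
    obtain ⟨f, hfinj, hfm⟩ := (Finset.all_card_le_biUnion_card_iff_exists_injective L).1 hall
    exact ⟨f, hfm, fun h => by simpa using hfinj h, fun h => by simpa using hfinj h,
      fun h => by simpa using hfinj h, fun h => by simpa using hfinj h,
      fun h => by simpa using hfinj h, fun h => by simpa using hfinj h,
      fun h => by simpa using hfinj h, fun h => by simpa using hfinj h,
      fun h => by simpa using hfinj h⟩
end

section
/- Let J2 be the graph with vertices v1,...,v6 and edges v1v2, v2v3, v3v4, v1v5, v2v5, v3v6, v4v6. Suppose L is a list assignment with |L(v1)| = 2, |L(v2)| = 4, |L(v3)| = 4, |L(v4)| = 3, |L(v5)| = 2, |L(v6)| = 2, and L(v1) ≠ L(v5). Then the square of J2 admits a proper L-coloring. -/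
private lemma pair_card_le (a b : ℕ) : ({a, b} : Finset ℕ).card ≤ 2 :=
  le_trans (Finset.card_insert_le _ _) (by simp)

/-- If all cross pairs from `A`, `B` land on `P` or `Q`, an element of `A` must be in `B`
(core contradiction step). -/
private lemma core {A B P Q : Finset ℕ} {u b1 b2 a' : ℕ}
    (hu : u ∈ A) (hb1 : b1 ∈ B) (hb2 : b2 ∈ B) (hb : b1 ≠ b2)
    (ha' : a' ∈ A) (hau : a' ≠ u) (hub1 : u ≠ b1) (hub2 : u ≠ b2)
    (h1 : P = {u, b1}) (h2 : Q = {u, b2})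
    (K : ∀ a ∈ A, ∀ b ∈ B, a ≠ b → P = {a, b} ∨ Q = {a, b}) : False := by
  have hab1 : a' = b1 := by
    by_contra hne
    rcases K a' ha' b1 hb1 hne with h | h
    · have hm : a' ∈ ({u, b1} : Finset ℕ) := by rw [← h1, h]; simp
      simp only [Finset.mem_insert, Finset.mem_singleton] at hm
      rcases hm with h' | h'
      · exact hau h'
      · exact hne h'
    · have hm : b1 ∈ ({u, b2} : Finset ℕ) := by rw [← h2, h]; simp
      simp only [Finset.mem_insert, Finset.mem_singleton] at hm
      rcases hm with h' | h'
      · exact hub1 h'.symm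
      · exact hb h'
  have hab2 : a' = b2 := by
    by_contra hne
    rcases K a' ha' b2 hb2 hne with h | h
    · have hm : b2 ∈ ({u, b1} : Finset ℕ) := by rw [← h1, h]; simp
      simp only [Finset.mem_insert, Finset.mem_singleton] at hm
      rcases hm with h' | h'
      · exact hub2 h'.symm
      · exact hb h'.symm
    · have hm : a' ∈ ({u, b2} : Finset ℕ) := by rw [← h2, h]; simp
      simp only [Finset.mem_insert, Finset.mem_singleton] at hm
      rcases hm with h' | h'
      · exact hau h'
      · exact hne h'
  exact hb (hab1 ▸ hab2 ▸ rfl)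

private lemma mem_aux {A B P Q : Finset ℕ}
    (K : ∀ a ∈ A, ∀ b ∈ B, a ≠ b → P = {a, b} ∨ Q = {a, b})
    {b1 b2 u a' : ℕ} (hb1 : b1 ∈ B) (hb2 : b2 ∈ B) (hb : b1 ≠ b2)
    (hu : u ∈ A) (ha' : a' ∈ A) (hau : a' ≠ u) : u ∈ B := by
  by_contra huB
  have hub1 : u ≠ b1 := fun h => huB (h ▸ hb1)
  have hub2 : u ≠ b2 := fun h => huB (h ▸ hb2)
  rcases K u hu b1 hb1 hub1 with h1 | h1 <;> rcases K u hu b2 hb2 hub2 with h2 | h2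
  · have hm : b1 ∈ ({u, b2} : Finset ℕ) := by rw [← h2, h1]; simp
    simp only [Finset.mem_insert, Finset.mem_singleton] at hm
    rcases hm with h' | h'
    · exact hub1 h'.symm
    · exact hb h'
  · exact core hu hb1 hb2 hb ha' hau hub1 hub2 h1 h2 K
  · exact core hu hb1 hb2 hb ha' hau hub1 hub2 h1 h2
      (fun a ha b hb' hab => (K a ha b hb' hab).symm)
  · have hm : b1 ∈ ({u, b2} : Finset ℕ) := by rw [← h2, h1]; simp
    simp only [Finset.mem_insert, Finset.mem_singleton] at hm
    rcases hm with h' | h'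
    · exact hub1 h'.symm
    · exact hb h'

private lemma three_pairs {P Q : Finset ℕ} {x y z : ℕ}
    (hxy : x ≠ y) (hxz : x ≠ z) (hyz : y ≠ z)
    (e1 : P = {x, y} ∨ Q = {x, y}) (e2 : P = {x, z} ∨ Q = {x, z})
    (e3 : P = {y, z} ∨ Q = {y, z}) : False := by
  have pairA : ∀ {a b c d : ℕ}, ({a, b} : Finset ℕ) = {c, d} → a = c ∨ a = d := by
    intro a b c d h
    have hm : a ∈ ({c, d} : Finset ℕ) := by rw [← h]; simp
    simpa using hm
  have pairB : ∀ {a b c d : ℕ}, ({a, b} : Finset ℕ) = {c, d} → b = c ∨ b = d := by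
    intro a b c d h
    have hm : b ∈ ({c, d} : Finset ℕ) := by rw [← h]; simp
    simpa using hm
  rcases e1 with h1 | h1 <;> rcases e2 with h2 | h2 <;> rcases e3 with h3 | h3
  · rcases pairB (h1.symm.trans h2) with h | h
    · exact hxy h.symm
    · exact hyz h
  · rcases pairB (h1.symm.trans h2) with h | h
    · exact hxy h.symm
    · exact hyz h
  · rcases pairA (h1.symm.trans h3) with h | h
    · exact hxy h
    · exact hxz h
  · rcases pairA (h2.symm.trans h3) with h | h
    · exact hxy h
    · exact hxz h
  · rcases pairA (h2.symm.trans h3) with h | h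
    · exact hxy h
    · exact hxz h
  · rcases pairA (h1.symm.trans h3) with h | h
    · exact hxy h
    · exact hxz h
  · rcases pairB (h1.symm.trans h2) with h | h
    · exact hxy h.symm
    · exact hyz h
  · rcases pairB (h1.symm.trans h2) with h | h
    · exact hxy h.symm
    · exact hyz h

private lemma three_eq {S : Finset ℕ} {t x y : ℕ} (hc : S.card = 3)
    (hsub : S ⊆ {t, x, y}) (htx : t ≠ x) (hty : t ≠ y) (hxy : x ≠ y) :
    x ∈ S ∧ y ∈ S := by
  have h2 : ({x, y} : Finset ℕ).card = 2 := Finset.card_pair hxy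
  have h3 : ({t, x, y} : Finset ℕ).card ≤ 3 := by
    refine le_trans (Finset.card_insert_le _ _) ?_
    omega
  have heq : S = {t, x, y} := Finset.eq_of_subset_of_card_le hsub (by omega)
  constructor <;> rw [heq] <;> simp

/-- Case `x, y ∈ S4` of the bad configuration. -/
private lemma caseI (S0 S1 S2 S3 S4 S5 : Finset ℕ)
    (h4 : S3.card = 3) (h6 : S5.card = 2)
    (α β t x y : ℕ)
    (hα0 : α ∈ S0) (hβ0 : β ∈ S0) (hβα : β ≠ α)
    (ht3 : t ∈ S3) (ht5 : t ∉ S5)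
    (hα1 : α ∈ S1) (hα2 : α ∈ S2) (ht1 : t ∈ S1) (ht2 : t ∈ S2)
    (hx1 : x ∈ S1) (hx2 : x ∈ S2) (hy1 : y ∈ S1) (hy2 : y ∈ S2)
    (hαt : α ≠ t) (hxα : x ≠ α) (hxt : x ≠ t) (hyα : y ≠ α) (hyt : y ≠ t) (hxy : x ≠ y)
    (hx4 : x ∈ S4) (hy4 : y ∈ S4) :
    ∃ b0 b1 b2 b3 b4 b5 : ℕ, b0 ∈ S0 ∧ b1 ∈ S1 ∧ b2 ∈ S2 ∧ b3 ∈ S3 ∧ b4 ∈ S4 ∧ b5 ∈ S5 ∧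
      b0 ≠ b1 ∧ b0 ≠ b2 ∧ b0 ≠ b4 ∧ b1 ≠ b2 ∧ b1 ≠ b3 ∧ b1 ≠ b4 ∧ b1 ≠ b5 ∧
      b2 ≠ b3 ∧ b2 ≠ b4 ∧ b2 ≠ b5 ∧ b3 ≠ b5 := by
  by_cases hE : ∃ e ∈ S5, e ≠ x ∧ e ≠ y
  · obtain ⟨e, he5, hex, hey⟩ := hE
    have het : e ≠ t := fun h => ht5 (h ▸ he5)
    have hsd := Finset.le_card_sdiff ({t, e} : Finset ℕ) S3
    have hte2 : ({t, e} : Finset ℕ).card ≤ 2 := pair_card_le t e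
    obtain ⟨c, hc⟩ := Finset.card_pos.mp (show 0 < (S3 \ {t, e}).card by omega)
    rw [Finset.mem_sdiff] at hc
    obtain ⟨hc3, hcn⟩ := hc
    simp only [Finset.mem_insert, Finset.mem_singleton, not_or] at hcn
    obtain ⟨hct, hce⟩ := hcn
    have htc : t ≠ c := fun h => hct h.symm
    by_cases hcx : c = x
    · exact ⟨α, t, y, c, x, e, hα0, ht1, hy2, hc3, hx4, he5,
        hαt, hyα.symm, hxα.symm, hyt.symm, htc, hxt.symm, het.symm,
        (by rw [hcx]; exact hxy.symm), hxy.symm, hey.symm, hce⟩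
    · by_cases hcy : c = y
      · exact ⟨α, t, x, c, y, e, hα0, ht1, hx2, hc3, hy4, he5,
          hαt, hxα.symm, hyα.symm, hxt.symm, htc, hyt.symm, het.symm,
          (by rw [hcy]; exact hxy), hxy, hex.symm, hce⟩
      · exact ⟨α, t, y, c, x, e, hα0, ht1, hy2, hc3, hx4, he5,
          hαt, hyα.symm, hxα.symm, hyt.symm, htc, hxt.symm, het.symm,
          (fun h => hcy h.symm), hxy.symm, hey.symm, hce⟩
  · push_neg at hE
    have hsub5 : S5 ⊆ ({x, y} : Finset ℕ) := by
      intro e he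
      simp only [Finset.mem_insert, Finset.mem_singleton]
      by_cases h : e = x
      · exact Or.inl h
      · exact Or.inr (hE e he h)
    have hpc : ({x, y} : Finset ℕ).card = 2 := Finset.card_pair hxy
    have hL5 : S5 = {x, y} := Finset.eq_of_subset_of_card_le hsub5 (by omega)
    have hx5 : x ∈ S5 := by rw [hL5]; simp
    have hy5 : y ∈ S5 := by rw [hL5]; simp
    by_cases hC : ∃ c ∈ S3, c ≠ t ∧ c ≠ x ∧ c ≠ y
    · obtain ⟨c, hc3, hct, hcx, hcy⟩ := hC
      exact ⟨α, t, y, c, x, x, hα0, ht1, hy2, hc3, hx4, hx5,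
        hαt, hyα.symm, hxα.symm, hyt.symm, (fun h => hct h.symm : t ≠ c), hxt.symm, hxt.symm,
        (fun h => hcy h.symm), hxy.symm, hxy.symm, hcx⟩
    · push_neg at hC
      have hsub3 : S3 ⊆ ({t, x, y} : Finset ℕ) := by
        intro c hc
        simp only [Finset.mem_insert, Finset.mem_singleton]
        by_cases h1 : c = t
        · exact Or.inl h1
        · by_cases h2 : c = x
          · exact Or.inr (Or.inl h2)
          · exact Or.inr (Or.inr (hC c hc h1 h2))
      obtain ⟨hx3, hy3⟩ := three_eq h4 hsub3 hxt.symm hyt.symm hxy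
      by_cases hβt : β = t
      · exact ⟨β, α, y, t, x, x, hβ0, hα1, hy2, ht3, hx4, hx5,
          hβα, (by rw [hβt]; exact hyt.symm), (by rw [hβt]; exact hxt.symm),
          hyα.symm, hαt, hxα.symm, hxα.symm, hyt, hxy.symm, hxy.symm, hxt.symm⟩
      · by_cases hβx : β = x
        · exact ⟨β, α, t, y, y, β, hβ0, hα1, ht2, hy3, hy4, (by rw [hβx]; exact hx5),
            hβα, (by rw [hβx]; exact hxt), (by rw [hβx]; exact hxy),
            hαt, hyα.symm, hyα.symm, hβα.symm, hyt.symm, hyt.symm,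
            (by rw [hβx]; exact hxt.symm), (by rw [hβx]; exact hxy.symm)⟩
        · by_cases hβy : β = y
          · exact ⟨β, α, t, x, x, β, hβ0, hα1, ht2, hx3, hx4, (by rw [hβy]; exact hy5),
              hβα, (by rw [hβy]; exact hyt), (by rw [hβy]; exact hxy.symm),
              hαt, hxα.symm, hxα.symm, hβα.symm, hxt.symm, hxt.symm,
              (by rw [hβy]; exact hyt.symm), (by rw [hβy]; exact hxy)⟩
          · exact ⟨β, α, t, y, x, x, hβ0, hα1, ht2, hy3, hx4, hx5,
              hβα, hβt, hβx, hαt, hyα.symm, hxα.symm, hxα.symm,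
              hyt.symm, hxt.symm, hxt.symm, hxy.symm⟩

/-- Main construction lemma, assuming some element of `S0` avoids `S4`. -/
private lemma key (S0 S1 S2 S3 S4 S5 : Finset ℕ)
    (h1 : S0.card = 2) (h2 : S1.card = 4) (h3 : S2.card = 4)
    (h4 : S3.card = 3) (h5 : S4.card = 2) (h6 : S5.card = 2)
    (hex : ∃ a ∈ S0, a ∉ S4) :
    ∃ b0 b1 b2 b3 b4 b5 : ℕ, b0 ∈ S0 ∧ b1 ∈ S1 ∧ b2 ∈ S2 ∧ b3 ∈ S3 ∧ b4 ∈ S4 ∧ b5 ∈ S5 ∧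
      b0 ≠ b1 ∧ b0 ≠ b2 ∧ b0 ≠ b4 ∧ b1 ≠ b2 ∧ b1 ≠ b3 ∧ b1 ≠ b4 ∧ b1 ≠ b5 ∧
      b2 ≠ b3 ∧ b2 ≠ b4 ∧ b2 ≠ b5 ∧ b3 ≠ b5 := by
  obtain ⟨α, hα0, hα4⟩ := hex
  have hts : ¬ S3 ⊆ S5 := fun h => by have := Finset.card_le_card h; omega
  obtain ⟨t, ht3, ht5⟩ := Finset.not_subset.mp hts
  have hple : ({α, t} : Finset ℕ).card ≤ 2 := pair_card_le α t
  have hAge : 2 ≤ (S1 \ {α, t}).card := by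
    have := Finset.le_card_sdiff ({α, t} : Finset ℕ) S1
    omega
  have hBge : 2 ≤ (S2 \ {α, t}).card := by
    have := Finset.le_card_sdiff ({α, t} : Finset ℕ) S2
    omega
  by_cases hgood : ∃ a ∈ S1 \ {α, t}, ∃ b ∈ S2 \ {α, t},
      a ≠ b ∧ (S4 \ {a, b}).Nonempty ∧ (S5 \ {a, b}).Nonempty
  · obtain ⟨a, ha, b, hb, hab, h4n, h5n⟩ := hgood
    obtain ⟨c4, hc4⟩ := h4n
    obtain ⟨c5, hc5⟩ := h5n
    rw [Finset.mem_sdiff] at ha hb hc4 hc5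
    obtain ⟨haS1, han⟩ := ha
    obtain ⟨hbS2, hbn⟩ := hb
    obtain ⟨hc4S, hc4n⟩ := hc4
    obtain ⟨hc5S, hc5n⟩ := hc5
    simp only [Finset.mem_insert, Finset.mem_singleton, not_or] at han hbn hc4n hc5n
    exact ⟨α, a, b, t, c4, c5, hα0, haS1, hbS2, ht3, hc4S, hc5S,
      (fun h => han.1 h.symm), (fun h => hbn.1 h.symm), (fun h => hα4 (h ▸ hc4S)),
      hab, han.2, (fun h => hc4n.1 h.symm), (fun h => hc5n.1 h.symm),
      hbn.2, (fun h => hc4n.2 h.symm), (fun h => hc5n.2 h.symm), (fun h => ht5 (h ▸ hc5S))⟩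
  · have K : ∀ a ∈ S1 \ {α, t}, ∀ b ∈ S2 \ {α, t}, a ≠ b →
        S4 = {a, b} ∨ S5 = {a, b} := by
      intro a ha b hb hab
      by_contra hK
      push_neg at hK
      refine hgood ⟨a, ha, b, hb, hab, ?_, ?_⟩
      · rw [Finset.sdiff_nonempty]
        intro hsubn
        exact hK.1 (Finset.eq_of_subset_of_card_le hsubn
          (by have := pair_card_le a b; omega))
      · rw [Finset.sdiff_nonempty]
        intro hsubn
        exact hK.2 (Finset.eq_of_subset_of_card_le hsubn
          (by have := pair_card_le a b; omega))
    obtain ⟨bb1, hb1, bb2, hb2, hb12⟩ := Finset.one_lt_card.mp (by omega : 1 < (S2 \ {α, t}).card)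
    obtain ⟨x, ha1, y, ha2, hxy⟩ := Finset.one_lt_card.mp (by omega : 1 < (S1 \ {α, t}).card)
    have hA2 : (S1 \ {α, t}).card ≤ 2 := by
      by_contra hA3
      obtain ⟨x1, x2, x3, hx1, hx2, hx3, h12, h13, h23⟩ :=
        Finset.two_lt_card_iff.mp (by omega : 2 < (S1 \ {α, t}).card)
      have m2 : x2 ∈ S2 \ {α, t} := mem_aux K hb1 hb2 hb12 hx2 hx1 h12
      have m3 : x3 ∈ S2 \ {α, t} := mem_aux K hb1 hb2 hb12 hx3 hx1 h13
      exact three_pairs h12 h13 h23 (K x1 hx1 x2 m2 h12) (K x1 hx1 x3 m3 h13)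
        (K x2 hx2 x3 m3 h23)
    have hB2 : (S2 \ {α, t}).card ≤ 2 := by
      by_contra hB3
      have K2 : ∀ b ∈ S2 \ {α, t}, ∀ a ∈ S1 \ {α, t}, b ≠ a →
          S4 = {b, a} ∨ S5 = {b, a} := by
        intro b hb a ha hba
        rcases K a ha b hb hba.symm with h | h
        · left; rw [h, Finset.pair_comm]
        · right; rw [h, Finset.pair_comm]
      obtain ⟨x1, x2, x3, hx1, hx2, hx3, h12, h13, h23⟩ :=
        Finset.two_lt_card_iff.mp (by omega : 2 < (S2 \ {α, t}).card)
      have m1 : x1 ∈ S1 \ {α, t} := mem_aux K2 ha1 ha2 hxy hx1 hx2 h12.symm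
      have m2 : x2 ∈ S1 \ {α, t} := mem_aux K2 ha1 ha2 hxy hx2 hx1 h12
      exact three_pairs h12 h13 h23 (K x1 m1 x2 hx2 h12) (K x1 m1 x3 hx3 h13)
        (K x2 m2 x3 hx3 h23)
    have hαt : α ≠ t := by
      intro h
      have e : (S1 \ {α, t}) = S1 \ {t} := by
        rw [h]
        congr 1
        ext z; simp
      have hle := Finset.le_card_sdiff ({t} : Finset ℕ) S1
      rw [Finset.card_singleton] at hle
      rw [e] at hA2
      omega
    have hp2 : ({α, t} : Finset ℕ).card = 2 := Finset.card_pair hαt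
    have hα1 : α ∈ S1 ∧ t ∈ S1 := by
      have hid := Finset.card_sdiff_add_card_inter S1 ({α, t} : Finset ℕ)
      have hint : S1 ∩ {α, t} = {α, t} :=
        Finset.eq_of_subset_of_card_le Finset.inter_subset_right (by omega)
      constructor
      · have : α ∈ S1 ∩ {α, t} := by rw [hint]; simp
        exact (Finset.mem_inter.mp this).1
      · have : t ∈ S1 ∩ {α, t} := by rw [hint]; simp
        exact (Finset.mem_inter.mp this).1
    have hα2' : α ∈ S2 ∧ t ∈ S2 := by
      have hid := Finset.card_sdiff_add_card_inter S2 ({α, t} : Finset ℕ)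
      have hint : S2 ∩ {α, t} = {α, t} :=
        Finset.eq_of_subset_of_card_le Finset.inter_subset_right (by omega)
      constructor
      · have : α ∈ S2 ∩ {α, t} := by rw [hint]; simp
        exact (Finset.mem_inter.mp this).1
      · have : t ∈ S2 ∩ {α, t} := by rw [hint]; simp
        exact (Finset.mem_inter.mp this).1
    -- the second element of S0
    have hβex : ∃ β ∈ S0, β ≠ α := by
      obtain ⟨u, hu, v, hv, huv⟩ := Finset.one_lt_card.mp (by omega : 1 < S0.card)
      by_cases h : u = α
      · exact ⟨v, hv, fun hh => huv (by rw [h, hh])⟩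
      · exact ⟨u, hu, h⟩
    obtain ⟨β, hβ0, hβα⟩ := hβex
    -- the two elements x, y
    have hxB : x ∈ S2 \ {α, t} := mem_aux K hb1 hb2 hb12 ha1 ha2 hxy.symm
    have hyB : y ∈ S2 \ {α, t} := mem_aux K hb1 hb2 hb12 ha2 ha1 hxy
    obtain ⟨hxS1, hxn⟩ := Finset.mem_sdiff.mp ha1
    obtain ⟨hyS1, hyn⟩ := Finset.mem_sdiff.mp ha2
    obtain ⟨hxS2, _⟩ := Finset.mem_sdiff.mp hxB
    obtain ⟨hyS2, _⟩ := Finset.mem_sdiff.mp hyB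
    simp only [Finset.mem_insert, Finset.mem_singleton, not_or] at hxn hyn
    have hxα : x ≠ α := hxn.1
    have hxt : x ≠ t := hxn.2
    have hyα : y ≠ α := hyn.1
    have hyt : y ≠ t := hyn.2
    rcases K x ha1 y hyB hxy with hP | hQ
    · -- S4 = {x, y} : case I
      have hx4 : x ∈ S4 := by rw [hP]; simp
      have hy4 : y ∈ S4 := by rw [hP]; simp
      exact caseI S0 S1 S2 S3 S4 S5 h4 h6 α β t x y hα0 hβ0 hβα ht3 ht5
        hα1.1 hα2'.1 hα1.2 hα2'.2 hxS1 hxS2 hyS1 hyS2 hαt hxα hxt hyα hyt hxy hx4 hy4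
    · -- S5 = {x, y} : case II
      have hx5 : x ∈ S5 := by rw [hQ]; simp
      have hy5 : y ∈ S5 := by rw [hQ]; simp
      by_cases hD : ∃ d ∈ S4, d ≠ t ∧ d ≠ x ∧ d ≠ y
      · obtain ⟨d, hd4, hdt, hdx, hdy⟩ := hD
        have hαd : α ≠ d := fun h => hα4 (h ▸ hd4)
        by_cases hC : ∃ c ∈ S3, c ≠ t ∧ c ≠ x ∧ c ≠ y
        · obtain ⟨c, hc3, hct, hcx, hcy⟩ := hC
          exact ⟨α, t, y, c, d, x, hα0, hα1.2, hyS2, hc3, hd4, hx5,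
            hαt, hyα.symm, hαd, hyt.symm, hct.symm, hdt.symm, hxt.symm,
            (fun h => hcy h.symm), hdy.symm, hxy.symm, hcx⟩
        · push_neg at hC
          have hsub3 : S3 ⊆ ({t, x, y} : Finset ℕ) := by
            intro c hc
            simp only [Finset.mem_insert, Finset.mem_singleton]
            by_cases hh1 : c = t
            · exact Or.inl hh1
            · by_cases hh2 : c = x
              · exact Or.inr (Or.inl hh2)
              · exact Or.inr (Or.inr (hC c hc hh1 hh2))
          obtain ⟨hx3, hy3⟩ := three_eq h4 hsub3 hxt.symm hyt.symm hxy
          by_cases hβt : β = t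
          · exact ⟨β, α, y, t, d, x, hβ0, hα1.1, hyS2, ht3, hd4, hx5,
              hβα, (by rw [hβt]; exact hyt.symm), (by rw [hβt]; exact hdt.symm),
              hyα.symm, hαt, hαd, hxα.symm, hyt, hdy.symm, hxy.symm, hxt.symm⟩
          · by_cases hβx : β = x
            · exact ⟨β, α, t, y, d, x, hβ0, hα1.1, hα2'.2, hy3, hd4, hx5,
                hβα, (by rw [hβx]; exact hxt), (by rw [hβx]; exact hdx.symm),
                hαt, hyα.symm, hαd, hxα.symm, hyt.symm, hdt.symm, hxt.symm, hxy.symm⟩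
            · by_cases hβy : β = y
              · exact ⟨β, α, t, x, d, y, hβ0, hα1.1, hα2'.2, hx3, hd4, hy5,
                  hβα, (by rw [hβy]; exact hyt), (by rw [hβy]; exact hdy.symm),
                  hαt, hxα.symm, hαd, hyα.symm, hxt.symm, hdt.symm, hyt.symm, hxy⟩
              · by_cases hβd : β = d
                · obtain ⟨u1, hu1, u2, hu2, hu12⟩ :=
                    Finset.one_lt_card.mp (by omega : 1 < S4.card)
                  have hd'ex : ∃ d' ∈ S4, d' ≠ d := by
                    by_cases h : u1 = d
                    · exact ⟨u2, hu2, fun hh => hu12 (by rw [h, hh])⟩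
                    · exact ⟨u1, hu1, h⟩
                  obtain ⟨d', hd'4, hd'd⟩ := hd'ex
                  have hαd' : α ≠ d' := fun h => hα4 (h ▸ hd'4)
                  have hβd' : β ≠ d' := by rw [hβd]; exact hd'd.symm
                  by_cases h't : d' = t
                  · exact ⟨β, α, y, t, t, x, hβ0, hα1.1, hyS2, ht3,
                      (by rw [← h't]; exact hd'4), hx5,
                      hβα, hβy, hβt, hyα.symm, hαt, hαt, hxα.symm, hyt, hyt,
                      hxy.symm, hxt.symm⟩
                  · by_cases h'x : d' = x
                    · exact ⟨β, α, t, x, x, y, hβ0, hα1.1, hα2'.2, hx3,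
                        (by rw [← h'x]; exact hd'4), hy5,
                        hβα, hβt, hβx, hαt, hxα.symm, hxα.symm, hyα.symm,
                        hxt.symm, hxt.symm, hyt.symm, hxy⟩
                    · by_cases h'y : d' = y
                      · exact ⟨β, α, t, y, y, x, hβ0, hα1.1, hα2'.2, hy3,
                          (by rw [← h'y]; exact hd'4), hx5,
                          hβα, hβt, hβy, hαt, hyα.symm, hyα.symm, hxα.symm,
                          hyt.symm, hyt.symm, hxt.symm, hxy.symm⟩
                      · exact ⟨β, α, t, x, d', y, hβ0, hα1.1, hα2'.2, hx3, hd'4, hy5,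
                          hβα, hβt, hβd', hαt, hxα.symm, hαd', hyα.symm,
                          hxt.symm, (fun h => h't h.symm), hyt.symm, hxy⟩
                · exact ⟨β, α, t, x, d, y, hβ0, hα1.1, hα2'.2, hx3, hd4, hy5,
                    hβα, hβt, hβd, hαt, hxα.symm, hαd, hyα.symm,
                    hxt.symm, hdt.symm, hyt.symm, hxy⟩
      · push_neg at hD
        have hsub4 : S4 ⊆ ({t, x, y} : Finset ℕ) := by
          intro d hd
          simp only [Finset.mem_insert, Finset.mem_singleton]
          by_cases hh1 : d = t
          · exact Or.inl hh1
          · by_cases hh2 : d = x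
            · exact Or.inr (Or.inl hh2)
            · exact Or.inr (Or.inr (hD d hd hh1 hh2))
        by_cases hx4' : x ∈ S4 ∧ y ∈ S4
        · exact caseI S0 S1 S2 S3 S4 S5 h4 h6 α β t x y hα0 hβ0 hβα ht3 ht5
            hα1.1 hα2'.1 hα1.2 hα2'.2 hxS1 hxS2 hyS1 hyS2 hαt hxα hxt hyα hyt hxy
            hx4'.1 hx4'.2
        · obtain ⟨u1, hu1, u2, hu2, hu12⟩ :=
            Finset.one_lt_card.mp (by omega : 1 < S4.card)
          have hu1m : u1 = t ∨ u1 = x ∨ u1 = y := by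
            have := hsub4 hu1; simpa using this
          have hu2m : u2 = t ∨ u2 = x ∨ u2 = y := by
            have := hsub4 hu2; simpa using this
          have hTW : t ∈ S4 ∧ ∃ w, w ∈ S4 ∧ (w = x ∨ w = y) := by
            rcases hu1m with e | e | e <;> rcases hu2m with f | f | f
            · exact absurd (e.trans f.symm) hu12
            · exact ⟨by rw [← e]; exact hu1, u2, hu2, Or.inl f⟩
            · exact ⟨by rw [← e]; exact hu1, u2, hu2, Or.inr f⟩
            · exact ⟨by rw [← f]; exact hu2, u1, hu1, Or.inl e⟩
            · exact absurd (e.trans f.symm) hu12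
            · exact absurd ⟨by rw [← e]; exact hu1, by rw [← f]; exact hu2⟩ hx4'
            · exact ⟨by rw [← f]; exact hu2, u1, hu1, Or.inr e⟩
            · exact absurd ⟨by rw [← f]; exact hu2, by rw [← e]; exact hu1⟩ hx4'
            · exact absurd (e.trans f.symm) hu12
          obtain ⟨ht4, w, hw4, hwxy⟩ := hTW
          by_cases hβx : β = x
          · exact ⟨β, α, y, t, t, β, hβ0, hα1.1, hyS2, ht3, ht4,
              (by rw [hβx]; exact hx5),
              hβα, (by rw [hβx]; exact hxy), (by rw [hβx]; exact hxt),
              hyα.symm, hαt, hαt, hβα.symm, hyt, hyt,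
              (by rw [hβx]; exact hxy.symm), (by rw [hβx]; exact hxt.symm)⟩
          · by_cases hβy : β = y
            · exact ⟨β, α, x, t, t, β, hβ0, hα1.1, hxS2, ht3, ht4,
                (by rw [hβy]; exact hy5),
                hβα, (by rw [hβy]; exact hxy.symm), (by rw [hβy]; exact hyt),
                hxα.symm, hαt, hαt, hβα.symm, hxt, hxt,
                (by rw [hβy]; exact hxy), (by rw [hβy]; exact hyt.symm)⟩
            · rcases hwxy with hwx | hwy
              · exact ⟨β, α, y, t, w, w, hβ0, hα1.1, hyS2, ht3, hw4,
                  (by rw [hwx]; exact hx5),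
                  hβα, hβy, (by rw [hwx]; exact hβx),
                  hyα.symm, hαt, (by rw [hwx]; exact hxα.symm),
                  (by rw [hwx]; exact hxα.symm), hyt,
                  (by rw [hwx]; exact hxy.symm), (by rw [hwx]; exact hxy.symm),
                  (by rw [hwx]; exact hxt.symm)⟩
              · exact ⟨β, α, x, t, w, w, hβ0, hα1.1, hxS2, ht3, hw4,
                  (by rw [hwy]; exact hy5),
                  hβα, hβx, (by rw [hwy]; exact hβy),
                  hxα.symm, hαt, (by rw [hwy]; exact hyα.symm),
                  (by rw [hwy]; exact hyα.symm), hxt,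
                  (by rw [hwy]; exact hxy), (by rw [hwy]; exact hxy),
                  (by rw [hwy]; exact hyt.symm)⟩

/-- Lemma 2.3 (1): the square of `J2` (edges `v1v2, v2v3, v3v4, v1v5, v2v5, v3v6, v4v6`)
has adjacencies `v1v2, v1v3, v1v5, v2v3, v2v4, v2v5, v2v6, v3v4, v3v5, v3v6, v4v6`.
If the lists have sizes `2, 4, 4, 3, 2, 2` and `L(v1) ≠ L(v5)`, then the square of `J2`
is `L`-colorable. Vertex `i : Fin 6` stands for `v(i+1)`. -/
theorem J2_square_list_colorable_one (L : Fin 6 → Finset ℕ)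
    (h1 : (L 0).card = 2) (h2 : (L 1).card = 4) (h3 : (L 2).card = 4)
    (h4 : (L 3).card = 3) (h5 : (L 4).card = 2) (h6 : (L 5).card = 2)
    (hne : L 0 ≠ L 4) :
    ∃ f : Fin 6 → ℕ, (∀ v, f v ∈ L v) ∧
      f 0 ≠ f 1 ∧ f 0 ≠ f 2 ∧ f 0 ≠ f 4 ∧
      f 1 ≠ f 2 ∧ f 1 ≠ f 3 ∧ f 1 ≠ f 4 ∧ f 1 ≠ f 5 ∧
      f 2 ≠ f 3 ∧ f 2 ≠ f 4 ∧ f 2 ≠ f 5 ∧ f 3 ≠ f 5 := by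
  by_cases hsub : L 0 ⊆ L 4
  · have h' : ¬ L 4 ⊆ L 0 := fun h => hne (Finset.Subset.antisymm hsub h)
    obtain ⟨a, ha4, ha0⟩ := Finset.not_subset.mp h'
    obtain ⟨b0, b1, b2, b3, b4, b5, m0, m1, m2, m3, m4, m5,
      i01, i02, i04, i12, i13, i14, i15, i23, i24, i25, i35⟩ :=
      key (L 4) (L 1) (L 2) (L 3) (L 0) (L 5) h5 h2 h3 h4 h1 h6 ⟨a, ha4, ha0⟩
    refine ⟨![b4, b1, b2, b3, b0, b5], ?_, i14.symm, i24.symm, i04.symm, i12, i13,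
      i01.symm, i15, i23, i02.symm, i25, i35⟩
    intro v
    fin_cases v
    exacts [m4, m1, m2, m3, m0, m5]
  · obtain ⟨a, ha0, ha4⟩ := Finset.not_subset.mp hsub
    obtain ⟨b0, b1, b2, b3, b4, b5, m0, m1, m2, m3, m4, m5,
      i01, i02, i04, i12, i13, i14, i15, i23, i24, i25, i35⟩ :=
      key (L 0) (L 1) (L 2) (L 3) (L 4) (L 5) h1 h2 h3 h4 h5 h6 ⟨a, ha0, ha4⟩
    refine ⟨![b0, b1, b2, b3, b4, b5], ?_, i01, i02, i04, i12, i13, i14, i15,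
      i23, i24, i25, i35⟩
    intro v
    fin_cases v
    exacts [m0, m1, m2, m3, m4, m5]
end

section
/- Let G be a graph that is vertex-minimal subject to: G is planar, subcubic, contains no cycles of length 4 through 8, and G^2 is not 6-choosable. Then no vertex of degree 2 in G lies on a triangle. -/
open SimpleGraph

variable {V : Type*}

/-- The square of a graph: join two distinct vertices at distance at most 2. -/
def SimpleGraph.square (G : SimpleGraph V) : SimpleGraph V where
  Adj u v := u ≠ v ∧ (G.Adj u v ∨ ∃ w, G.Adj u w ∧ G.Adj w v)
  symm := by
    refine ⟨?_⟩
    rintro u v ⟨hne, h | ⟨w, hw1, hw2⟩⟩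
    · exact ⟨hne.symm, Or.inl h.symm⟩
    · exact ⟨hne.symm, Or.inr ⟨w, hw2.symm, hw1.symm⟩⟩
  loopless := ⟨fun v h => h.1 rfl⟩

/-- `k`-choosability: every list assignment with lists of size at least `k`
admits a proper coloring from the lists. -/
def SimpleGraph.Choosable (G : SimpleGraph V) (k : ℕ) : Prop :=
  ∀ L : V → Finset ℕ, (∀ v, k ≤ (L v).card) →
    ∃ f : V → ℕ, (∀ v, f v ∈ L v) ∧ ∀ u v, G.Adj u v → f u ≠ f v

/-- `H` is a minor of `G`: there are nonempty, pairwise disjoint, connected branch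
sets in `G` realizing the adjacencies of `H`. -/
def SimpleGraph.HasMinor {W : Type*} (G : SimpleGraph V) (H : SimpleGraph W) : Prop :=
  ∃ f : W → Set V,
    (∀ w, (f w).Nonempty) ∧
    (∀ w, (G.induce (f w)).Connected) ∧
    (∀ w₁ w₂, w₁ ≠ w₂ → Disjoint (f w₁) (f w₂)) ∧
    (∀ w₁ w₂, H.Adj w₁ w₂ → ∃ a ∈ f w₁, ∃ b ∈ f w₂, G.Adj a b)

/-- Planarity via Wagner's theorem: no `K₅` minor and no `K₃,₃` minor. -/
def SimpleGraph.Planar (G : SimpleGraph V) : Prop :=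
  ¬ G.HasMinor (completeGraph (Fin 5)) ∧
    ¬ G.HasMinor (completeBipartiteGraph (Fin 3) (Fin 3))

/-- `G` contains no cycles of length 4 through 8. -/
def SimpleGraph.NoCycle4To8 (G : SimpleGraph V) : Prop :=
  ∀ (v : V) (c : G.Walk v v), c.IsCycle → ¬ (4 ≤ c.length ∧ c.length ≤ 8)

/-! Delete the degree-2 vertex `x` of the triangle `xyz`. Since the two neighbours of `x` are
adjacent, no edge of `G²` between vertices other than `x` runs only through `x`, so a list colouring
of `(G - x)²`, which exists by minimality, colours `G² - x`. In `G²` the vertex `x` sees only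
`N(y) ∪ N(z)` minus `x` itself, at most five vertices, so one of its six colours is still free. -/

namespace SimpleGraph

variable {k : ℕ}

theorem Choosable.mono_left {G G' : SimpleGraph V} (h : G ≤ G') (hG' : G'.Choosable k) :
    G.Choosable k := by
  intro L hL
  obtain ⟨f, hfL, hf⟩ := hG' L hL
  exact ⟨f, hfL, fun u v huv => hf u v (h huv)⟩

theorem Choosable.of_induce_compl_singleton [DecidableEq V] {H : SimpleGraph V} {x : V}
    (N : Finset V) (hN : ∀ v, H.Adj x v → v ∈ N) (hcard : N.card < k)
    (h : (H.induce {x}ᶜ).Choosable k) : H.Choosable k := by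
  intro L hL
  obtain ⟨f, hfL, hf⟩ := h (fun v => L v) (fun v => hL v)
  let f₀ : V → ℕ := fun v => if hv : v = x then 0 else f ⟨v, hv⟩
  have hf₀ : ∀ v (hv : v ≠ x), f₀ v = f ⟨v, hv⟩ := fun v hv => dif_neg hv
  obtain ⟨c, hcL, hcN⟩ : ∃ c ∈ L x, c ∉ N.image f₀ := by
    by_contra! hsub
    have := Finset.card_le_card (s := L x) hsub
    have := hL x
    have := N.card_image_le (f := f₀)
    omega
  have hfree : ∀ v, H.Adj x v → f₀ v ≠ c := fun v hv heq =>
    hcN (heq ▸ Finset.mem_image_of_mem f₀ (hN v hv))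
  refine ⟨Function.update f₀ x c, fun v => ?_, fun u v huv => ?_⟩
  · rcases eq_or_ne v x with rfl | hv
    · simpa using hcL
    · simpa [hv, hf₀ v hv] using hfL ⟨v, hv⟩
  · rcases eq_or_ne u x with rfl | hu
    · simpa [huv.ne.symm] using (hfree v huv).symm
    rcases eq_or_ne v x with rfl | hv
    · simpa [hu] using hfree u huv.symm
    simpa [hu, hv, hf₀ u hu, hf₀ v hv] using hf ⟨u, hu⟩ ⟨v, hv⟩ huv

theorem square_induce_compl_singleton_le {G : SimpleGraph V} {x : V}
    (hx : G.IsClique (G.neighborSet x)) :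
    G.square.induce {x}ᶜ ≤ (G.induce {x}ᶜ).square := by
  rintro u v ⟨huv, hadj | ⟨w, huw, hwv⟩⟩
  · exact ⟨fun h => huv (congrArg Subtype.val h), Or.inl hadj⟩
  · refine ⟨fun h => huv (congrArg Subtype.val h), ?_⟩
    rcases eq_or_ne w x with rfl | hw
    · exact Or.inl (hx huw.symm hwv huv)
    · exact Or.inr ⟨⟨w, hw⟩, huw, hwv⟩

theorem neighborFinset_eq_pair_of_degree_eq_two [Fintype V] [DecidableEq V] {G : SimpleGraph V}
    [DecidableRel G.Adj] {x y z : V} (hdeg : G.degree x = 2) (hxy : G.Adj x y)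
    (hxz : G.Adj x z) (hyz : y ≠ z) : G.neighborFinset x = {y, z} := by
  refine (Finset.eq_of_subset_of_card_le (fun v hv => ?_) ?_).symm
  · rcases Finset.mem_insert.mp hv with rfl | hv
    · simpa using hxy
    · simpa [Finset.mem_singleton.mp hv] using hxz
  · rw [card_neighborFinset_eq_degree, hdeg, Finset.card_pair hyz]

theorem square_adj_of_neighborSet_eq_pair {G : SimpleGraph V} {x y z v : V}
    (hx : G.neighborSet x = {y, z}) (hyz : G.Adj y z) (hv : G.square.Adj x v) :
    v ≠ x ∧ (G.Adj y v ∨ G.Adj z v) := by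
  have hnbr : ∀ w, G.Adj x w → w = y ∨ w = z := fun w hw => by
    rwa [← mem_neighborSet, hx] at hw
  obtain ⟨hxv, hadj | ⟨w, hxw, hwv⟩⟩ := hv
  · refine ⟨hxv.symm, ?_⟩
    rcases hnbr v hadj with rfl | rfl
    · exact Or.inr hyz.symm
    · exact Or.inl hyz
  · refine ⟨hxv.symm, ?_⟩
    rcases hnbr w hxw with rfl | rfl
    · exact Or.inl hwv
    · exact Or.inr hwv

end SimpleGraph

theorem min_counterexample_no_two_vertex_on_triangle_general
    [Fintype V] [DecidableEq V] (G : SimpleGraph V) [DecidableRel G.Adj]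
    (hsubcubic : ∀ v, G.degree v ≤ 3)
    (hnot : ¬ G.square.Choosable 6)
    (hmin : ∀ s : Set V, s ≠ Set.univ → ((G.induce s).square).Choosable 6) :
    ¬ ∃ x y z : V, G.degree x = 2 ∧ G.Adj x y ∧ G.Adj y z ∧ G.Adj z x := by
  rintro ⟨x, y, z, hdeg, hxy, hyz, hzx⟩
  have hNx : G.neighborSet x = {y, z} := by
    ext v
    simp [← mem_neighborFinset, neighborFinset_eq_pair_of_degree_eq_two hdeg hxy hzx.symm hyz.ne]
  have hclique : G.IsClique (G.neighborSet x) := hNx ▸ isClique_pair.mpr fun _ => hyz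
  have hcard : ((G.neighborFinset y ∪ G.neighborFinset z).erase x).card < 6 := by
    have hunion := Finset.card_union_le (G.neighborFinset y) (G.neighborFinset z)
    rw [card_neighborFinset_eq_degree, card_neighborFinset_eq_degree] at hunion
    rw [Finset.card_erase_of_mem (by simp [hxy.symm])]
    have := hsubcubic y
    have := hsubcubic z
    omega
  refine hnot (Choosable.of_induce_compl_singleton _ (fun v hv => ?_) hcard
    ((hmin {x}ᶜ (by simp)).mono_left (square_induce_compl_singleton_le hclique)))
  obtain ⟨hvx, hv⟩ := square_adj_of_neighborSet_eq_pair hNx hyz hv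
  simpa [hvx] using hv

/-- Claim 3.1(2): in a vertex-minimal subcubic planar graph with no 4- to 8-cycles whose
square is not 6-choosable (minimality: deleting any nonempty set of vertices yields an
induced subgraph whose square is 6-choosable), no vertex of degree 2 lies on a triangle. -/
theorem min_counterexample_no_two_vertex_on_triangle
    [Fintype V] [DecidableEq V] (G : SimpleGraph V) [DecidableRel G.Adj]
    (hplanar : G.Planar)
    (hsubcubic : ∀ v, G.degree v ≤ 3)
    (hcycles : G.NoCycle4To8)
    (hnot : ¬ G.square.Choosable 6)
    (hmin : ∀ s : Set V, s ≠ Set.univ → ((G.induce s).square).Choosable 6) :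
    ¬ ∃ x y z : V, G.degree x = 2 ∧ G.Adj x y ∧ G.Adj y z ∧ G.Adj z x :=
  min_counterexample_no_two_vertex_on_triangle_general G hsubcubic hnot hmin
end

section
/- Let V = {v1,...,v10} and let H be the graph on V with edges {v_i v_{i+1} : 1 ≤ i ≤ 9} ∪ {v10 v1} (a 10-cycle), together with the distance-2 edges of the cycle: v_i v_{i+2} (indices mod 10). Suppose L assigns to each v_i a list with |L(v_i)| ≥ 4 if i is odd and |L(v_i)| ≥ 3 if i is even. Then H admits a proper L-coloring. -/
private lemma pick_avoid (s t : Finset ℕ) (h : t.card < s.card) : ∃ a ∈ s, a ∉ t := by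
  by_contra hc
  push_neg at hc
  have hsub : s ⊆ t := fun a ha => hc a ha
  have := Finset.card_le_card hsub
  omega

private lemma pick1 (s : Finset ℕ) (b : ℕ) (h : 2 ≤ s.card) : ∃ a ∈ s, a ≠ b := by
  obtain ⟨a, ha, hn⟩ := pick_avoid s {b} (by simp; omega)
  exact ⟨a, ha, by simpa using hn⟩

private lemma pick2 (s : Finset ℕ) (b c : ℕ) (h : 3 ≤ s.card) :
    ∃ a ∈ s, a ≠ b ∧ a ≠ c := by
  have hcard : ({b, c} : Finset ℕ).card < s.card := by
    have := Finset.card_insert_le b ({c} : Finset ℕ)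
    simp at this
    omega
  obtain ⟨a, ha, hn⟩ := pick_avoid s {b, c} hcard
  simp at hn
  exact ⟨a, ha, hn.1, hn.2⟩

private lemma pick3 (s : Finset ℕ) (b c d : ℕ) (h : 4 ≤ s.card) :
    ∃ a ∈ s, a ≠ b ∧ a ≠ c ∧ a ≠ d := by
  have hcard : ({b, c, d} : Finset ℕ).card < s.card := by
    have h1 := Finset.card_insert_le b ({c, d} : Finset ℕ)
    have h2 := Finset.card_insert_le c ({d} : Finset ℕ)
    simp at h1 h2
    omega
  obtain ⟨a, ha, hn⟩ := pick_avoid s {b, c, d} hcard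
  simp at hn
  exact ⟨a, ha, hn.1, hn.2.1, hn.2.2⟩

private lemma glue (L : Fin 10 → Finset ℕ) (f0 f1 f2 f3 f4 f5 f6 f7 f8 f9 : ℕ)
    (m0 : f0 ∈ L 0) (m1 : f1 ∈ L 1) (m2 : f2 ∈ L 2) (m3 : f3 ∈ L 3) (m4 : f4 ∈ L 4)
    (m5 : f5 ∈ L 5) (m6 : f6 ∈ L 6) (m7 : f7 ∈ L 7) (m8 : f8 ∈ L 8) (m9 : f9 ∈ L 9)
    (e01 : f1 ≠ f0) (e02 : f2 ≠ f0) (e12 : f2 ≠ f1) (e13 : f3 ≠ f1) (e23 : f3 ≠ f2)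
    (e24 : f4 ≠ f2) (e34 : f4 ≠ f3) (e35 : f5 ≠ f3) (e45 : f5 ≠ f4) (e46 : f6 ≠ f4)
    (e56 : f6 ≠ f5) (e57 : f7 ≠ f5) (e67 : f7 ≠ f6) (e68 : f8 ≠ f6) (e78 : f8 ≠ f7)
    (e79 : f9 ≠ f7) (e89 : f9 ≠ f8) (e08 : f8 ≠ f0) (e09 : f9 ≠ f0) (e19 : f9 ≠ f1) :
    ∃ f : Fin 10 → ℕ, (∀ j, f j ∈ L j) ∧
      ∀ i j : Fin 10, ((i.val + 1) % 10 = j.val ∨ (i.val + 2) % 10 = j.val) →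
        f i ≠ f j := by
  refine ⟨![f0, f1, f2, f3, f4, f5, f6, f7, f8, f9], ?_, ?_⟩
  · intro j
    fin_cases j
    exacts [m0, m1, m2, m3, m4, m5, m6, m7, m8, m9]
  · have key : ∀ i j : Fin 10, ((i.val + 1) % 10 = j.val ∨ (i.val + 2) % 10 = j.val) →
        (i = 0 ∧ j = 1) ∨ (i = 0 ∧ j = 2) ∨ (i = 1 ∧ j = 2) ∨ (i = 1 ∧ j = 3) ∨ (i = 2 ∧ j = 3) ∨ (i = 2 ∧ j = 4) ∨ (i = 3 ∧ j = 4) ∨ (i = 3 ∧ j = 5) ∨ (i = 4 ∧ j = 5) ∨ (i = 4 ∧ j = 6) ∨ (i = 5 ∧ j = 6) ∨ (i = 5 ∧ j = 7) ∨ (i = 6 ∧ j = 7) ∨ (i = 6 ∧ j = 8) ∨ (i = 7 ∧ j = 8) ∨ (i = 7 ∧ j = 9) ∨ (i = 8 ∧ j = 9) ∨ (i = 8 ∧ j = 0) ∨ (i = 9 ∧ j = 0) ∨ (i = 9 ∧ j = 1) := by decide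
    intro i j h
    rcases key i j h with ⟨rfl, rfl⟩ | ⟨rfl, rfl⟩ | ⟨rfl, rfl⟩ | ⟨rfl, rfl⟩ | ⟨rfl, rfl⟩ | ⟨rfl, rfl⟩ | ⟨rfl, rfl⟩ | ⟨rfl, rfl⟩ | ⟨rfl, rfl⟩ | ⟨rfl, rfl⟩ | ⟨rfl, rfl⟩ | ⟨rfl, rfl⟩ | ⟨rfl, rfl⟩ | ⟨rfl, rfl⟩ | ⟨rfl, rfl⟩ | ⟨rfl, rfl⟩ | ⟨rfl, rfl⟩ | ⟨rfl, rfl⟩ | ⟨rfl, rfl⟩ | ⟨rfl, rfl⟩ <;>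
      first
      | exact e01
      | exact e01.symm
      | exact e02
      | exact e02.symm
      | exact e12
      | exact e12.symm
      | exact e13
      | exact e13.symm
      | exact e23
      | exact e23.symm
      | exact e24
      | exact e24.symm
      | exact e34
      | exact e34.symm
      | exact e35
      | exact e35.symm
      | exact e45
      | exact e45.symm
      | exact e46
      | exact e46.symm
      | exact e56
      | exact e56.symm
      | exact e57
      | exact e57.symm
      | exact e67
      | exact e67.symm
      | exact e68
      | exact e68.symm
      | exact e78
      | exact e78.symm
      | exact e79
      | exact e79.symm
      | exact e89
      | exact e89.symm
      | exact e08
      | exact e08.symm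
      | exact e09
      | exact e09.symm
      | exact e19
      | exact e19.symm

/-- Configuration `H4`: the square of the 10-cycle restricted to its cycle vertices,
i.e. the circulant graph `C10(1,2)` in which `v_i ~ v_{i±1}, v_{i±2}` (mod 10), is
colorable from lists where `|L(v_i)| ≥ 4` for odd `i` and `|L(v_i)| ≥ 3` for even `i`.
Vertex `j : Fin 10` stands for `v_{j+1}`, so odd labels `v_1, v_3, …` correspond to
even indices `j`. -/
theorem circulant_C10_12_list_colorable (L : Fin 10 → Finset ℕ)
    (hodd : ∀ j : Fin 10, j.val % 2 = 0 → 4 ≤ (L j).card)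
    (heven : ∀ j : Fin 10, j.val % 2 = 1 → 3 ≤ (L j).card) :
    ∃ f : Fin 10 → ℕ, (∀ j, f j ∈ L j) ∧
      ∀ i j : Fin 10, ((i.val + 1) % 10 = j.val ∨ (i.val + 2) % 10 = j.val) →
        f i ≠ f j := by
  have h0 := hodd 0 rfl
  have h1 := heven 1 rfl
  have h2 := hodd 2 rfl
  have h3 := heven 3 rfl
  have h4 := hodd 4 rfl
  have h5 := heven 5 rfl
  have h6 := hodd 6 rfl
  have h7 := heven 7 rfl
  have h8 := hodd 8 rfl
  have h9 := heven 9 rfl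
  -- shrink L 9 to a 3-element subset K
  obtain ⟨K, hKL, hK3⟩ := Finset.exists_subset_card_eq (s := L 9) (n := 3) h9
  obtain ⟨f0, hf0, hf0K⟩ := pick_avoid (L 0) K (by omega)
  obtain ⟨f1, hf1, e10⟩ := pick1 (L 1) f0 (by omega)
  obtain ⟨f2, hf2, e20, e21⟩ := pick2 (L 2) f0 f1 (by omega)
  obtain ⟨f3, hf3, e31, e32⟩ := pick2 (L 3) f1 f2 (by omega)
  obtain ⟨f4, hf4, e42, e43⟩ := pick2 (L 4) f2 f3 (by omega)
  obtain ⟨f5, hf5, e53, e54⟩ := pick2 (L 5) f3 f4 (by omega)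
  have hMcard : 2 ≤ (K \ {f1}).card := by
    have := Finset.card_le_card_sdiff_add_card (s := K) (t := {f1})
    simp at this
    omega
  by_cases hM : 3 ≤ (K \ {f1}).card
  · -- easy case: K \ {f1} has at least 3 elements
    obtain ⟨f6, hf6, e64, e65⟩ := pick2 (L 6) f4 f5 (by omega)
    obtain ⟨f7, hf7, e75, e76⟩ := pick2 (L 7) f5 f6 (by omega)
    obtain ⟨f8, hf8, e86, e87, e80⟩ := pick3 (L 8) f6 f7 f0 (by omega)
    obtain ⟨f9, hf9M, e97, e98⟩ := pick2 (K \ {f1}) f7 f8 hM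
    have hf9K : f9 ∈ K := (Finset.mem_sdiff.mp hf9M).1
    have e91 : f9 ≠ f1 := by
      have := (Finset.mem_sdiff.mp hf9M).2
      simpa using this
    have e90 : f9 ≠ f0 := fun h => hf0K (h ▸ hf9K)
    exact glue L f0 f1 f2 f3 f4 f5 f6 f7 f8 f9 hf0 hf1 hf2 hf3 hf4 hf5 hf6 hf7 hf8
      (hKL hf9K) e10 e20 e21 e31 e32 e42 e43 e53 e54 e64 e65 e75 e76 e86 e87 e97 e98
      e80 e90 e91
  · -- K \ {f1} = {x, y}
    have hM2 : (K \ {f1}).card = 2 := by omega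
    obtain ⟨x, y, hxy, hMxy⟩ := Finset.card_eq_two.mp hM2
    have hxM : x ∈ K \ {f1} := by rw [hMxy]; simp
    have hyM : y ∈ K \ {f1} := by rw [hMxy]; simp
    have hxK : x ∈ K := (Finset.mem_sdiff.mp hxM).1
    have hyK : y ∈ K := (Finset.mem_sdiff.mp hyM).1
    have ex1 : x ≠ f1 := by have := (Finset.mem_sdiff.mp hxM).2; simpa using this
    have ey1 : y ≠ f1 := by have := (Finset.mem_sdiff.mp hyM).2; simpa using this
    have ex0 : x ≠ f0 := fun h => hf0K (h ▸ hxK)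
    have ey0 : y ≠ f0 := fun h => hf0K (h ▸ hyK)
    obtain ⟨w, hw, ew0, ewx, ewy⟩ := pick3 (L 8) f0 x y (by omega)
    obtain ⟨f6, hf6, e64, e65, e6w⟩ := pick3 (L 6) f4 f5 w (by omega)
    obtain ⟨f7, hf7, e75, e76⟩ := pick2 (L 7) f5 f6 (by omega)
    by_cases h7xy : f7 = x ∨ f7 = y
    · -- f7 ∈ {x,y}: take f8 := w and f9 := the other of x, y
      have e87 : w ≠ f7 := by
        rcases h7xy with h | h
        · rw [h]; exact fun hh => ewx hh
        · rw [h]; exact fun hh => ewy hh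
      rcases h7xy with h7 | h7
      · -- f7 = x, f9 := y
        exact glue L f0 f1 f2 f3 f4 f5 f6 f7 w y hf0 hf1 hf2 hf3 hf4 hf5 hf6 hf7 hw
          (hKL hyK) e10 e20 e21 e31 e32 e42 e43 e53 e54 e64 e65 e75 e76 e6w.symm e87
          (by rw [h7]; exact hxy.symm) (fun hh => ewy hh.symm) ew0 ey0 ey1
      · -- f7 = y, f9 := x
        exact glue L f0 f1 f2 f3 f4 f5 f6 f7 w x hf0 hf1 hf2 hf3 hf4 hf5 hf6 hf7 hw
          (hKL hxK) e10 e20 e21 e31 e32 e42 e43 e53 e54 e64 e65 e75 e76 e6w.symm e87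
          (by rw [h7]; exact hxy) (fun hh => ewx hh.symm) ew0 ex0 ex1
    · push_neg at h7xy
      obtain ⟨e7x, e7y⟩ := h7xy
      obtain ⟨f8, hf8, e86, e87, e80⟩ := pick3 (L 8) f6 f7 f0 (by omega)
      by_cases h8x : f8 = x
      · -- f9 := y
        exact glue L f0 f1 f2 f3 f4 f5 f6 f7 f8 y hf0 hf1 hf2 hf3 hf4 hf5 hf6 hf7 hf8
          (hKL hyK) e10 e20 e21 e31 e32 e42 e43 e53 e54 e64 e65 e75 e76 e86 e87
          (fun hh => e7y hh.symm) (by rw [h8x]; exact hxy.symm) e80 ey0 ey1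
      · -- f9 := x
        exact glue L f0 f1 f2 f3 f4 f5 f6 f7 f8 x hf0 hf1 hf2 hf3 hf4 hf5 hf6 hf7 hf8
          (hKL hxK) e10 e20 e21 e31 e32 e42 e43 e53 e54 e64 e65 e75 e76 e86 e87
          (fun hh => e7x hh.symm) (fun hh => h8x hh.symm) e80 ex0 ex1
end
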